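/- A graph G has a δ-Partitionable fractional perfect matching if and only if E contains a collection of δ nonempty, pairwise vertex-disjoint edge sets E_1, …, E_δ such that (1) ⋃_{j∈[δ]} E_j is an edge cover of G, and (2) for each j ∈ [δ]: (i) every connected component of the subgraph with edge set E_j (after deleting isolated vertices) is either a single edge or an odd cycle, and (ii) |V(E_j)| = |V|/δ. -/

import Mathlib

open Finset
open scoped Classical

variable {V : Type*} [Fintype V] [DecidableEq V]

/-- The sum of `f` over the edges (elements of `Sym2 V`) containing the vertex `v`. -/
noncomputable def fracDeg (f : Sym2 V → ℝ) (v : V) : ℝ :=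
  ∑ e ∈ Finset.univ.filter (fun e : Sym2 V => v ∈ e), f e

/-- `f` is a fractional matching of `G`. -/
def IsFracMatching (G : SimpleGraph V) (f : Sym2 V → ℝ) : Prop :=
  (∀ e, 0 ≤ f e ∧ f e ≤ 1) ∧ (∀ e, e ∉ G.edgeSet → f e = 0) ∧ ∀ v, fracDeg f v ≤ 1

/-- `f` is a fractional perfect matching of `G`. -/
def IsFPM (G : SimpleGraph V) (f : Sym2 V → ℝ) : Prop :=
  (∀ e, 0 ≤ f e ∧ f e ≤ 1) ∧ (∀ e, e ∉ G.edgeSet → f e = 0) ∧ ∀ v, fracDeg f v = 1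

/-- `E(f)`: the set of edges with positive weight. -/
noncomputable def fSupp (f : Sym2 V → ℝ) : Finset (Sym2 V) :=
  Finset.univ.filter (fun e => 0 < f e)

/-- Number of edges of `F` containing `v` (the degree of `v` in the subgraph with edge set `F`). -/
noncomputable def edgeDeg (F : Finset (Sym2 V)) (v : V) : ℕ :=
  (F.filter (fun e => v ∈ e)).card

/-- The set of vertices incident to some edge of `F`. -/
noncomputable def vertSet (F : Finset (Sym2 V)) : Finset V :=
  Finset.univ.filter (fun v => ∃ e ∈ F, v ∈ e)

/-- Two edge-weight functions are equivalent: same incident sums at every vertex. -/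
def Equiv' (f f' : Sym2 V → ℝ) : Prop := ∀ v : V, fracDeg f v = fracDeg f' v

/-- `F` consists of a single edge. -/
def IsSingleEdge (F : Finset (Sym2 V)) : Prop := ∃ e : Sym2 V, F = {e}

/-- `F` is the edge set of an odd cycle. -/
def IsOddCycleSet (F : Finset (Sym2 V)) : Prop :=
  ∃ (v : V) (c : (SimpleGraph.fromEdgeSet (↑F : Set (Sym2 V))).Walk v v),
    c.IsCycle ∧ Odd c.length ∧ c.edges.toFinset = F

/-- Two edge sets are vertex-disjoint. -/
def VDisj (F F' : Finset (Sym2 V)) : Prop :=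
  ∀ v : V, (∃ e ∈ F, v ∈ e) → ¬ ∃ e ∈ F', v ∈ e

/-- Every connected component of the subgraph with edge set `F` (ignoring isolated
vertices) is either a single edge or an odd cycle, expressed via a partition of `F`
into pairwise vertex-disjoint such pieces. -/
def EdgesAndOddCycles (F : Finset (Sym2 V)) : Prop :=
  ∃ P : Finset (Finset (Sym2 V)),
    (∀ A ∈ P, IsSingleEdge A ∨ IsOddCycleSet A) ∧
    (∀ A ∈ P, ∀ B ∈ P, A ≠ B → VDisj A B) ∧
    P.biUnion id = F

/-- The family `P` witnesses that `f` is a `δ`-Partitionable fractional perfect matching. -/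
def IsPartitionWitness (f : Sym2 V → ℝ) (δ : ℕ) (P : Fin δ → Finset (Sym2 V)) : Prop :=
  (∀ j, (P j).Nonempty) ∧
  (∀ j k, j ≠ k → VDisj (P j) (P k)) ∧
  (∀ j, P j ⊆ fSupp f) ∧
  (∀ e ∈ fSupp f, ∃ j, e ∈ P j) ∧
  ∀ j, ∑ e ∈ P j, f e = (Fintype.card V : ℝ) / (2 * δ)

/-- `f` is `δ`-Partitionable. -/
def IsDeltaPartitionable (f : Sym2 V → ℝ) (δ : ℕ) : Prop :=
  ∃ P : Fin δ → Finset (Sym2 V), IsPartitionWitness f δ P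

/-! Restricted to one part `E_j` of the partition, a fractional perfect matching `f` is a positive
solution of the vertex equations `∑_{e ∋ v} f e = 1` on `E_j`, and double counting gives
`|V(E_j)| = 2 ∑_{E_j} f`. While the incidence vectors of `E_j` are linearly dependent, moving `f`
along a dependency (whose coordinates sum to zero, so one is negative) deletes an edge without
changing the vertex sums or the covered vertices. Once they are independent, an edge at a vertex
of degree one has weight one, so both its ends have degree one; the remaining edges have all
degrees at least two but no more edges than vertices, so they form a 2-regular graph, i.e.
disjoint cycles, and each cycle is odd because an even cycle carries the alternating dependency.
Conversely, weighting each edge by the inverse of the degree of its ends (`1` on single edges,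
`1/2` on cycles) gives a fractional perfect matching partitioned by the given edge sets. -/

open SimpleGraph

lemma mem_vertSet {F : Finset (Sym2 V)} {v : V} : v ∈ vertSet F ↔ ∃ e ∈ F, v ∈ e := by
  simp [vertSet]

lemma vertSet_mono {F F' : Finset (Sym2 V)} (h : F ⊆ F') : vertSet F ⊆ vertSet F' := by
  intro v hv
  obtain ⟨e, he, hve⟩ := mem_vertSet.1 hv
  exact mem_vertSet.2 ⟨e, h he, hve⟩

omit [Fintype V] [DecidableEq V] in
lemma VDisj.symm {F F' : Finset (Sym2 V)} (h : VDisj F F') : VDisj F' F :=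
  fun v h' h'' => h v h'' h'

omit [Fintype V] [DecidableEq V] in
lemma VDisj.mono {F₁ F₂ F₁' F₂' : Finset (Sym2 V)} (h : VDisj F₁ F₂) (h₁ : F₁' ⊆ F₁)
    (h₂ : F₂' ⊆ F₂) : VDisj F₁' F₂' :=
  fun v ⟨e, he, hve⟩ ⟨e', he', hve'⟩ => h v ⟨e, h₁ he, hve⟩ ⟨e', h₂ he', hve'⟩

theorem sum_vertSet_sum_filter_mem {M : Type*} [AddCommMonoid M] {F : Finset (Sym2 V)}
    (hF : ∀ e ∈ F, ¬ e.IsDiag) (w : Sym2 V → M) :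
    ∑ v ∈ vertSet F, ∑ e ∈ F with v ∈ e, w e = 2 • ∑ e ∈ F, w e := by
  rw [sum_comm' (t' := F) (s' := Sym2.toFinset), smul_sum]
  · refine sum_congr rfl fun e he => ?_
    rw [sum_const, Sym2.card_toFinset_of_not_isDiag e (hF e he)]
  · intro v e
    simp only [mem_filter, Sym2.mem_toFinset, mem_vertSet]
    constructor
    · rintro ⟨-, he, hve⟩
      exact ⟨hve, he⟩
    · rintro ⟨hve, he⟩
      exact ⟨⟨e, he, hve⟩, he, hve⟩

theorem sum_edgeDeg_vertSet {F : Finset (Sym2 V)} (hF : ∀ e ∈ F, ¬ e.IsDiag) :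
    ∑ v ∈ vertSet F, edgeDeg F v = 2 * #F := by
  have := sum_vertSet_sum_filter_mem hF (fun _ => 1)
  simp only [← card_eq_sum_ones, smul_eq_mul] at this
  exact this

lemma fracDeg_eq_sum_filter {f : Sym2 V → ℝ} {F : Finset (Sym2 V)} {v : V}
    (h : ∀ e, v ∈ e → f e ≠ 0 → e ∈ F) : fracDeg f v = ∑ e ∈ F with v ∈ e, f e := by
  refine (sum_subset (fun e he => ?_) fun e he he' => ?_).symm
  · exact mem_filter.2 ⟨mem_univ e, (mem_filter.1 he).2⟩
  · by_contra hfe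
    exact he' (mem_filter.2 ⟨h e (mem_filter.1 he).2 hfe, (mem_filter.1 he).2⟩)

theorem card_vertSet_eq_two_mul_sum {F : Finset (Sym2 V)} {f : Sym2 V → ℝ}
    (hF : ∀ e ∈ F, ¬ e.IsDiag) (hf : ∀ v ∈ vertSet F, ∑ e ∈ F with v ∈ e, f e = 1) :
    (#(vertSet F) : ℝ) = 2 * ∑ e ∈ F, f e := by
  have := sum_vertSet_sum_filter_mem hF f
  rw [sum_congr rfl hf] at this
  simpa using this

noncomputable def incVec (e : Sym2 V) : V → ℝ := fun v => if v ∈ e then 1 else 0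

omit [Fintype V] in
lemma linearCombination_incVec_apply {F : Finset (Sym2 V)} {l : Sym2 V →₀ ℝ}
    (hl : l ∈ Finsupp.supported ℝ ℝ (F : Set (Sym2 V))) (v : V) :
    Finsupp.linearCombination ℝ incVec l v = ∑ e ∈ F with v ∈ e, l e := by
  rw [Finsupp.linearCombination_apply, Finsupp.sum_of_support_subset l
    (by exact_mod_cast (Finsupp.mem_supported ℝ l).1 hl) _ (by simp), Finset.sum_apply, sum_filter]
  simp [incVec]

theorem card_le_card_vertSet_of_linearIndepOn {F : Finset (Sym2 V)}
    (h : LinearIndepOn ℝ incVec (F : Set (Sym2 V))) : #F ≤ #(vertSet F) := by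
  set R := LinearMap.funLeft ℝ ℝ ((↑) : vertSet F → V)
  have hR : LinearIndepOn ℝ (R ∘ incVec) (F : Set (Sym2 V)) := by
    refine linearIndepOn_iff.2 fun l hl hl0 => linearIndepOn_iff.1 h l hl ?_
    rw [← Finsupp.apply_linearCombination] at hl0
    funext v
    by_cases hv : v ∈ vertSet F
    · exact congrFun hl0 ⟨v, hv⟩
    · rw [linearCombination_incVec_apply hl]
      exact sum_eq_zero fun e he => absurd (mem_vertSet.2 ⟨e, (mem_filter.1 he).1,
        (mem_filter.1 he).2⟩) hv
  simpa using hR.fintype_card_le_finrank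

omit [Fintype V] in
lemma edgeDeg_mono {A F : Finset (Sym2 V)} (h : A ⊆ F) (v : V) : edgeDeg A v ≤ edgeDeg F v :=
  card_le_card (filter_subset_filter _ h)

omit [Fintype V] in
lemma edgeDeg_eq_of_forall_mem {A F : Finset (Sym2 V)} {v : V} (hAF : A ⊆ F)
    (h : ∀ e ∈ F, v ∈ e → e ∈ A) : edgeDeg A v = edgeDeg F v := by
  unfold edgeDeg
  congr 1
  ext e
  simp only [mem_filter]
  exact ⟨fun ⟨he, hve⟩ => ⟨hAF he, hve⟩, fun ⟨he, hve⟩ => ⟨h e he hve, hve⟩⟩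

omit [Fintype V] in
lemma edgeDeg_eq_ncard_neighborSet {H : SimpleGraph V} {F : Finset (Sym2 V)}
    (hF : H.edgeSet = F) (v : V) : edgeDeg F v = (H.neighborSet v).ncard := by
  have hinc : H.incidenceSet v = ↑(F.filter (v ∈ ·)) := by
    ext e
    simp [incidenceSet, hF]
  rw [edgeDeg, ← Set.ncard_coe_finset, ← hinc]
  exact Set.ncard_congr' (H.incidenceSetEquivNeighborSet v)

omit [Fintype V] [DecidableEq V] in
lemma edgeSet_fromEdgeSet_of_not_isDiag {F : Finset (Sym2 V)} (hF : ∀ e ∈ F, ¬ e.IsDiag) :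
    (fromEdgeSet (F : Set (Sym2 V))).edgeSet = F := by
  rw [edgeSet_fromEdgeSet, sdiff_eq_left, Set.disjoint_left]
  exact fun e he => hF e he

namespace SimpleGraph.Walk

variable {G : SimpleGraph V}

noncomputable def alternatingWeights : ∀ {u w : V}, G.Walk u w → Sym2 V →₀ ℝ
  | _, _, nil => 0
  | _, _, cons (u := a) (v := b) _ q => Finsupp.single s(a, b) 1 - q.alternatingWeights

omit [Fintype V] [DecidableEq V] in
lemma alternatingWeights_mem_supported {u w : V} (p : G.Walk u w) :
    p.alternatingWeights ∈ Finsupp.supported ℝ ℝ {e | e ∈ p.edges} := by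
  induction p with
  | nil => exact zero_mem _
  | cons h q ih =>
    exact sub_mem (Finsupp.single_mem_supported ℝ _ (by simp))
      (Finsupp.supported_mono (fun e he => List.mem_cons_of_mem _ he) ih)

omit [Fintype V] in
lemma linearCombination_alternatingWeights {u w : V} (p : G.Walk u w) :
    Finsupp.linearCombination ℝ incVec p.alternatingWeights =
      Pi.single u 1 - (-1) ^ p.length • Pi.single w 1 := by
  induction p with
  | nil => simp [alternatingWeights]
  | @cons a b c h q ih =>
    have hinc : incVec s(a, b) = Pi.single a 1 + Pi.single b 1 := by
      funext v
      by_cases hva : v = a <;> by_cases hvb : v = b <;> simp_all [incVec, h.ne]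
    simp only [alternatingWeights, map_sub, Finsupp.linearCombination_single, one_smul, ih,
      hinc, length_cons, pow_succ]
    module

omit [Fintype V] in
theorem IsCycle.odd_length_of_linearIndepOn {u : V} {c : G.Walk u u} (hc : c.IsCycle)
    (hind : LinearIndepOn ℝ incVec {e | e ∈ c.edges}) : Odd c.length := by
  rw [← Nat.not_even_iff_odd]
  intro heven
  have hzero := linearIndepOn_iff.1 hind _ c.alternatingWeights_mem_supported
    (by rw [linearCombination_alternatingWeights, heven.neg_one_pow, one_smul, sub_self])
  cases c with
  | nil => exact hc.not_nil nil_nil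
  | @cons _ b _ h q =>
    have hq : s(u, b) ∉ q.edges := (cons_isCycle_iff q h).1 hc |>.2
    have := DFunLike.congr_fun hzero s(u, b)
    simp only [alternatingWeights, Finsupp.coe_sub, Pi.sub_apply, Finsupp.single_eq_same,
      Finsupp.coe_zero, Pi.zero_apply] at this
    rw [Finsupp.notMem_support_iff.1 fun hs => hq
      ((Finsupp.mem_supported ℝ _).1 q.alternatingWeights_mem_supported hs)] at this
    norm_num at this

omit [Fintype V] in
lemma IsCycle.edgeDeg_edges_toFinset {u v : V} {c : G.Walk u u}
    (hc : c.IsCycle) (hv : v ∈ c.support) : edgeDeg c.edges.toFinset v = 2 := by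
  rw [edgeDeg_eq_ncard_neighborSet (H := c.toSubgraph.spanningCoe) (by simp [edgeSet])]
  exact hc.ncard_neighborSet_toSubgraph_eq_two hv

omit [Fintype V] in
lemma IsCycle.isOddCycleSet {u : V} {c : G.Walk u u}
    (hc : c.IsCycle) (hodd : Odd c.length) : IsOddCycleSet c.edges.toFinset := by
  have hq : ∀ e ∈ c.edges, e ∈ (fromEdgeSet (c.edges.toFinset : Set (Sym2 V))).edgeSet := by
    intro e he
    rw [edgeSet_fromEdgeSet]
    exact ⟨by simpa using he, G.not_isDiag_of_mem_edgeSet (c.edges_subset_edgeSet he)⟩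
  exact ⟨u, c.transfer _ hq, hc.transfer hq, by rwa [length_transfer],
    by rw [edges_transfer]⟩

end SimpleGraph.Walk

lemma isCycles_fromEdgeSet {F : Finset (Sym2 V)} (hF : ∀ e ∈ F, ¬ e.IsDiag)
    (h2 : ∀ v ∈ vertSet F, edgeDeg F v = 2) : (fromEdgeSet (F : Set (Sym2 V))).IsCycles := by
  rintro v ⟨w, hw⟩
  rw [← edgeDeg_eq_ncard_neighborSet (edgeSet_fromEdgeSet_of_not_isDiag hF)]
  exact h2 v (mem_vertSet.2 ⟨s(v, w), ((fromEdgeSet_adj _).1 hw).1, Sym2.mem_mk_left v w⟩)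

lemma exists_isCycle_of_edgeDeg_eq_two {F : Finset (Sym2 V)} (hF : ∀ e ∈ F, ¬ e.IsDiag)
    (h2 : ∀ v ∈ vertSet F, edgeDeg F v = 2) (hne : F.Nonempty) :
    ∃ (u : V) (c : (fromEdgeSet (F : Set (Sym2 V))).Walk u u), c.IsCycle := by
  obtain ⟨e, he⟩ := hne
  induction e using Sym2.ind with
  | h a b =>
    have hab : (fromEdgeSet (F : Set (Sym2 V))).Adj a b :=
      (fromEdgeSet_adj _).2 ⟨he, fun h => hF _ he (Sym2.mk_isDiag_iff.2 h)⟩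
    obtain ⟨u, c, hc, -⟩ := adj_and_reachable_delete_edges_iff_exists_cycle.1
      ⟨hab, IsCycles.reachable_deleteEdges hab (isCycles_fromEdgeSet hF h2)⟩
    exact ⟨u, c, hc⟩

omit [Fintype V] in
lemma IsOddCycleSet.edgeDeg_eq_two {A : Finset (Sym2 V)} (h : IsOddCycleSet A) {v : V}
    (hv : ∃ e ∈ A, v ∈ e) : edgeDeg A v = 2 := by
  obtain ⟨u, c, hc, -, hA⟩ := h
  obtain ⟨e, he, hve⟩ := hv
  rw [← hA] at he ⊢
  exact hc.edgeDeg_edges_toFinset (c.mem_support_of_mem_edges (List.mem_toFinset.1 he) hve)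

omit [Fintype V] in
lemma edgesAndOddCycles_empty : EdgesAndOddCycles (∅ : Finset (Sym2 V)) :=
  ⟨∅, by simp, by simp, by simp⟩

omit [Fintype V] in
lemma IsOddCycleSet.edgesAndOddCycles {A : Finset (Sym2 V)} (h : IsOddCycleSet A) :
    EdgesAndOddCycles A :=
  ⟨{A}, by simp [h], by simp, by simp⟩

omit [Fintype V] in
lemma edgesAndOddCycles_of_edgeDeg_le_one {F : Finset (Sym2 V)}
    (h : ∀ v, (∃ e ∈ F, v ∈ e) → edgeDeg F v ≤ 1) : EdgesAndOddCycles F := by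
  refine ⟨F.image ({·}), ?_, ?_, ?_⟩
  · simp only [mem_image]
    rintro _ ⟨e, -, rfl⟩
    exact Or.inl ⟨e, rfl⟩
  · simp only [mem_image]
    rintro _ ⟨e, he, rfl⟩ _ ⟨e', he', rfl⟩ hne v ⟨x, hx, hvx⟩ ⟨y, hy, hvy⟩
    rw [mem_singleton] at hx hy
    subst hx hy
    have h2 : 1 < edgeDeg F v := one_lt_card.2
      ⟨x, mem_filter.2 ⟨he, hvx⟩, y, mem_filter.2 ⟨he', hvy⟩, fun hxy => hne (hxy ▸ rfl)⟩
    exact absurd (h v ⟨x, he, hvx⟩) (not_le.2 h2)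
  · ext e
    simp

omit [Fintype V] in
lemma EdgesAndOddCycles.union {F₁ F₂ : Finset (Sym2 V)} (h₁ : EdgesAndOddCycles F₁)
    (h₂ : EdgesAndOddCycles F₂) (hd : VDisj F₁ F₂) : EdgesAndOddCycles (F₁ ∪ F₂) := by
  obtain ⟨P₁, hP₁, hd₁, rfl⟩ := h₁
  obtain ⟨P₂, hP₂, hd₂, rfl⟩ := h₂
  have hsub₁ : ∀ A ∈ P₁, A ⊆ P₁.biUnion id := fun A hA => subset_biUnion_of_mem id hA
  have hsub₂ : ∀ A ∈ P₂, A ⊆ P₂.biUnion id := fun A hA => subset_biUnion_of_mem id hA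
  refine ⟨P₁ ∪ P₂, ?_, ?_, union_biUnion ..⟩
  · intro A hA
    rcases mem_union.1 hA with hA | hA
    exacts [hP₁ A hA, hP₂ A hA]
  · intro A hA B hB hAB
    rcases mem_union.1 hA with hA | hA <;> rcases mem_union.1 hB with hB | hB
    · exact hd₁ A hA B hB hAB
    · exact hd.mono (hsub₁ A hA) (hsub₂ B hB)
    · exact hd.symm.mono (hsub₂ A hA) (hsub₁ B hB)
    · exact hd₂ A hA B hB hAB

omit [Fintype V] in
theorem EdgesAndOddCycles.edgeDeg_eq {F : Finset (Sym2 V)} (h : EdgesAndOddCycles F)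
    {e : Sym2 V} (he : e ∈ F) {u w : V} (hu : u ∈ e) (hw : w ∈ e) :
    edgeDeg F u = edgeDeg F w := by
  obtain ⟨P, hP, hdisj, rfl⟩ := h
  obtain ⟨A, hA, heA⟩ := mem_biUnion.1 he
  have hlocal : ∀ x ∈ e, edgeDeg A x = edgeDeg (P.biUnion id) x := by
    refine fun x hx => edgeDeg_eq_of_forall_mem (subset_biUnion_of_mem id hA) fun e' he' hxe' => ?_
    obtain ⟨B, hB, he'B⟩ := mem_biUnion.1 he'
    by_contra hne
    exact hdisj A hA B hB (by rintro rfl; exact hne he'B) x ⟨e, heA, hx⟩ ⟨e', he'B, hxe'⟩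
  rw [← hlocal u hu, ← hlocal w hw]
  rcases hP A hA with ⟨e', rfl⟩ | hodd
  · obtain rfl : e = e' := mem_singleton.1 heA
    simp [edgeDeg, filter_singleton, hu, hw]
  · rw [hodd.edgeDeg_eq_two ⟨e, heA, hu⟩, hodd.edgeDeg_eq_two ⟨e, heA, hw⟩]

theorem edgesAndOddCycles_of_edgeDeg_eq_two {F : Finset (Sym2 V)} (hF : ∀ e ∈ F, ¬ e.IsDiag)
    (h2 : ∀ v ∈ vertSet F, edgeDeg F v = 2) (hind : LinearIndepOn ℝ incVec (F : Set (Sym2 V))) :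
    EdgesAndOddCycles F := by
  induction F using Finset.strongInduction with
  | H F ih =>
  rcases F.eq_empty_or_nonempty with rfl | hne
  · exact edgesAndOddCycles_empty
  obtain ⟨u, c, hc⟩ := exists_isCycle_of_edgeDeg_eq_two hF h2 hne
  set A := c.edges.toFinset
  have hAF : A ⊆ F := fun e he => by
    have := c.edges_subset_edgeSet (List.mem_toFinset.1 he)
    rwa [edgeSet_fromEdgeSet_of_not_isDiag hF] at this
  have hAne : A.Nonempty :=
    (List.toFinset_nonempty_iff _).2 fun h => hc.not_nil (Walk.edges_eq_nil.1 h)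
  have hodd : IsOddCycleSet A := hc.isOddCycleSet
    (hc.odd_length_of_linearIndepOn (hind.mono fun e he => hAF (List.mem_toFinset.2 he)))
  have hclosed : ∀ v, (∃ e ∈ A, v ∈ e) → ∀ e ∈ F, v ∈ e → e ∈ A := by
    intro v hv e he hve
    have hdeg : edgeDeg F v ≤ edgeDeg A v := by
      rw [hodd.edgeDeg_eq_two hv, h2 v (vertSet_mono hAF (mem_vertSet.2 hv))]
    have := eq_of_subset_of_card_le (filter_subset_filter (v ∈ ·) hAF) hdeg
    exact (mem_filter.1 (this ▸ mem_filter.2 ⟨he, hve⟩)).1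
  have hdisj : VDisj A (F \ A) := fun v hv ⟨e, he, hve⟩ =>
    (mem_sdiff.1 he).2 (hclosed v hv e (mem_sdiff.1 he).1 hve)
  have hrest : EdgesAndOddCycles (F \ A) := by
    refine ih _ (sdiff_ssubset hAF hAne) (fun e he => hF e (mem_sdiff.1 he).1) (fun v hv => ?_)
      (hind.mono (by simp))
    obtain ⟨e, he, hve⟩ := mem_vertSet.1 hv
    rw [edgeDeg_eq_of_forall_mem sdiff_subset fun e' he' hve' => mem_sdiff.2
      ⟨he', fun he'A => hdisj v ⟨e', he'A, hve'⟩ ⟨e, he, hve⟩⟩]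
    exact h2 v (vertSet_mono sdiff_subset hv)
  rw [← union_sdiff_of_subset hAF]
  exact hodd.edgesAndOddCycles.union hrest hdisj

def IsPosFPMOn (F : Finset (Sym2 V)) (f : Sym2 V → ℝ) : Prop :=
  (∀ e ∈ F, 0 < f e) ∧ ∀ v ∈ vertSet F, ∑ e ∈ F with v ∈ e, f e = 1

namespace IsPosFPMOn

variable {F : Finset (Sym2 V)} {f : Sym2 V → ℝ}

lemma eq_one_of_edgeDeg_eq_one (hf : IsPosFPMOn F f) {e : Sym2 V} (he : e ∈ F) {v : V}
    (hve : v ∈ e) (hdeg : edgeDeg F v = 1) : f e = 1 := by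
  obtain ⟨e', he'⟩ := card_eq_one.1 hdeg
  have hee' : e = e' := mem_singleton.1 (he' ▸ mem_filter.2 ⟨he, hve⟩)
  have := hf.2 v (mem_vertSet.2 ⟨e, he, hve⟩)
  rwa [he', sum_singleton, ← hee'] at this

lemma edgeDeg_eq_one_of_eq_one (hf : IsPosFPMOn F f) {e : Sym2 V} (he : e ∈ F) (hfe : f e = 1)
    {v : V} (hve : v ∈ e) : edgeDeg F v = 1 := by
  have hsub : {e} ⊆ F.filter (v ∈ ·) := singleton_subset_iff.2 (mem_filter.2 ⟨he, hve⟩)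
  refine le_antisymm (not_lt.1 fun hlt => ?_) (card_le_card hsub)
  obtain ⟨e', he', hne⟩ := exists_mem_ne hlt e
  have := sum_lt_sum_of_subset hsub he' (by simpa using hne) (hf.1 e' (mem_filter.1 he').1)
    fun e'' he'' _ => (hf.1 e'' (mem_filter.1 he'').1).le
  rw [sum_singleton, hfe, hf.2 v (mem_vertSet.2 ⟨e, he, hve⟩)] at this
  exact lt_irrefl _ this

end IsPosFPMOn

theorem edgeDeg_eq_two_of_card_le {F : Finset (Sym2 V)} (hF : ∀ e ∈ F, ¬ e.IsDiag)
    (hcard : #F ≤ #(vertSet F)) (h2 : ∀ v ∈ vertSet F, 2 ≤ edgeDeg F v) :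
    ∀ v ∈ vertSet F, edgeDeg F v = 2 := by
  refine fun v hv => ((sum_eq_sum_iff_of_le h2).1 (le_antisymm (sum_le_sum h2) ?_) v hv).symm
  rw [sum_edgeDeg_vertSet hF, sum_const, smul_eq_mul]
  lia

theorem IsPosFPMOn.edgesAndOddCycles_of_linearIndepOn {F : Finset (Sym2 V)} {f : Sym2 V → ℝ}
    (hF : ∀ e ∈ F, ¬ e.IsDiag) (hf : IsPosFPMOn F f)
    (hind : LinearIndepOn ℝ incVec (F : Set (Sym2 V))) : EdgesAndOddCycles F := by
  set F₁ := F.filter fun e => ∀ v ∈ e, edgeDeg F v = 1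
  set F₂ := F.filter fun e => ¬ ∀ v ∈ e, edgeDeg F v = 1
  -- an edge at a vertex of degree 1 has weight 1, so its other end has degree 1 too
  have hF₂ : ∀ v, (∃ e ∈ F₂, v ∈ e) → edgeDeg F v ≠ 1 := by
    rintro v ⟨e, he, hve⟩ hdeg
    obtain ⟨he, hnot⟩ := mem_filter.1 he
    exact hnot fun u hu =>
      hf.edgeDeg_eq_one_of_eq_one he (hf.eq_one_of_edgeDeg_eq_one he hve hdeg) hu
  have hdisj : VDisj F₁ F₂ := fun v ⟨e, he, hve⟩ hv₂ => hF₂ v hv₂ ((mem_filter.1 he).2 v hve)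
  have hdeg₂ : ∀ v ∈ vertSet F₂, edgeDeg F₂ v = edgeDeg F v := fun v hv =>
    edgeDeg_eq_of_forall_mem (filter_subset _ _) fun e he hve => mem_filter.2
      ⟨he, fun h => hF₂ v (mem_vertSet.1 hv) (h v hve)⟩
  have hmatching : EdgesAndOddCycles F₁ := edgesAndOddCycles_of_edgeDeg_le_one
    fun v ⟨e, he, hve⟩ => ((edgeDeg_mono (filter_subset _ _) v).trans
      ((mem_filter.1 he).2 v hve).le)
  have hcycles : EdgesAndOddCycles F₂ := by
    have hF₂loop : ∀ e ∈ F₂, ¬ e.IsDiag := fun e he => hF e (mem_filter.1 he).1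
    have hind₂ := hind.mono (coe_subset.2 (show F₂ ⊆ F from filter_subset _ _))
    refine edgesAndOddCycles_of_edgeDeg_eq_two hF₂loop (edgeDeg_eq_two_of_card_le hF₂loop
      (card_le_card_vertSet_of_linearIndepOn hind₂) fun v hv => ?_) hind₂
    obtain ⟨e, he, hve⟩ := mem_vertSet.1 hv
    have hpos : 0 < edgeDeg F v :=
      card_pos.2 ⟨e, mem_filter.2 ⟨(mem_filter.1 he).1, hve⟩⟩
    have := hF₂ v ⟨e, he, hve⟩
    rw [hdeg₂ v hv]
    lia
  rw [← filter_union_filter_not_eq (p := fun e => ∀ v ∈ e, edgeDeg F v = 1) F]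
  exact hmatching.union hcycles hdisj

theorem exists_neg_of_sum_filter_eq_zero {F : Finset (Sym2 V)} {z : Sym2 V → ℝ}
    (hF : ∀ e ∈ F, ¬ e.IsDiag) (hz : ∀ v ∈ vertSet F, ∑ e ∈ F with v ∈ e, z e = 0)
    (hne : ∃ e ∈ F, z e ≠ 0) : ∃ e ∈ F, z e < 0 := by
  by_contra! hnonneg
  have hsum : ∑ e ∈ F, z e = 0 := by
    have := sum_vertSet_sum_filter_mem hF z
    rw [sum_congr rfl hz, sum_const_zero] at this
    simpa using this.symm
  obtain ⟨e, he, hze⟩ := hne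
  exact hze ((sum_eq_zero_iff_of_nonneg hnonneg).1 hsum e he)

theorem IsPosFPMOn.exists_ssubset_of_sum_filter_eq_zero {F : Finset (Sym2 V)}
    {f z : Sym2 V → ℝ} (hf : IsPosFPMOn F f)
    (hz : ∀ v ∈ vertSet F, ∑ e ∈ F with v ∈ e, z e = 0) (hneg : ∃ e ∈ F, z e < 0) :
    ∃ F' ⊂ F, ∃ f', vertSet F' = vertSet F ∧ IsPosFPMOn F' f' := by
  obtain ⟨e₀, he₀, hmin⟩ := (F.filter (z · < 0)).exists_min_image (fun e => f e / -z e)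
    (by simpa [Finset.Nonempty] using hneg)
  obtain ⟨he₀F, hz₀⟩ := mem_filter.1 he₀
  -- the largest step along `z` keeping every weight nonnegative
  set t := f e₀ / -z e₀
  set f' := fun e => f e + t * z e
  have hnonneg : ∀ e ∈ F, 0 ≤ f' e := by
    intro e he
    rcases lt_or_ge (z e) 0 with hze | hze
    · have := (le_div_iff₀ (neg_pos.2 hze)).1 (hmin e (mem_filter.2 ⟨he, hze⟩))
      simp only [f']
      nlinarith
    · exact add_nonneg (hf.1 e he).le (mul_nonneg (div_nonneg (hf.1 e₀ he₀F).le
        (neg_nonneg.2 hz₀.le)) hze)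
  have hf'₀ : f' e₀ = 0 := by
    simp only [f', t, div_neg, neg_mul, div_mul_cancel₀ _ hz₀.ne, add_neg_cancel]
  set F' := F.filter (0 < f' ·)
  have hsum : ∀ v ∈ vertSet F, ∑ e ∈ F' with v ∈ e, f' e = 1 := by
    intro v hv
    rw [sum_subset (filter_subset_filter _ (filter_subset _ F)) ?_]
    · simp only [f', sum_add_distrib, ← mul_sum, hf.2 v hv, hz v hv, mul_zero, add_zero]
    · intro e he he'
      obtain ⟨heF, hve⟩ := mem_filter.1 he
      exact le_antisymm (not_lt.1 fun h => he' (mem_filter.2 ⟨mem_filter.2 ⟨heF, h⟩, hve⟩))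
        (hnonneg e heF)
  have hvert : vertSet F' = vertSet F := by
    refine subset_antisymm (vertSet_mono (filter_subset _ _)) fun v hv => ?_
    obtain ⟨e, he, -⟩ := exists_ne_zero_of_sum_ne_zero ((hsum v hv).symm ▸ one_ne_zero)
    exact mem_vertSet.2 ⟨e, (mem_filter.1 he).1, (mem_filter.1 he).2⟩
  refine ⟨F', filter_ssubset.2 ⟨e₀, he₀F, by simp [hf'₀]⟩, f', hvert,
    fun e he => (mem_filter.1 he).2, fun v hv => hsum v (hvert ▸ hv)⟩

theorem IsPosFPMOn.exists_ssubset_of_not_linearIndepOn {F : Finset (Sym2 V)}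
    {f : Sym2 V → ℝ} (hF : ∀ e ∈ F, ¬ e.IsDiag) (hf : IsPosFPMOn F f)
    (hind : ¬ LinearIndepOn ℝ incVec (F : Set (Sym2 V))) :
    ∃ F' ⊂ F, ∃ f', vertSet F' = vertSet F ∧ IsPosFPMOn F' f' := by
  simp only [linearIndepOn_iff, not_forall] at hind
  obtain ⟨l, hl, hl0, hne⟩ := hind
  have hz : ∀ v ∈ vertSet F, ∑ e ∈ F with v ∈ e, l e = 0 := fun v _ => by
    rw [← linearCombination_incVec_apply hl, hl0, Pi.zero_apply]
  obtain ⟨e, he⟩ := Finsupp.ne_iff.1 hne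
  have heF : e ∈ F := (Finsupp.mem_supported ℝ l).1 hl (Finsupp.mem_support_iff.2 he)
  exact hf.exists_ssubset_of_sum_filter_eq_zero hz
    (exists_neg_of_sum_filter_eq_zero hF hz ⟨e, heF, he⟩)

theorem IsPosFPMOn.exists_edgesAndOddCycles {F : Finset (Sym2 V)} {f : Sym2 V → ℝ}
    (hF : ∀ e ∈ F, ¬ e.IsDiag) (hf : IsPosFPMOn F f) :
    ∃ F' ⊆ F, vertSet F' = vertSet F ∧ EdgesAndOddCycles F' := by
  induction F using Finset.strongInduction generalizing f with
  | H F ih =>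
  by_cases hind : LinearIndepOn ℝ incVec (F : Set (Sym2 V))
  · exact ⟨F, subset_rfl, rfl, hf.edgesAndOddCycles_of_linearIndepOn hF hind⟩
  · obtain ⟨F', hF', f', hvert, hf'⟩ := hf.exists_ssubset_of_not_linearIndepOn hF hind
    obtain ⟨F'', hsub, hvert', hF''⟩ := ih F' hF' (fun e he => hF e (hF'.subset he)) hf'
    exact ⟨F'', hsub.trans hF'.subset, hvert'.trans hvert, hF''⟩

omit [Fintype V] [DecidableEq V] in
lemma mem_of_vDisj {ι : Type*} {E : ι → Finset (Sym2 V)}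
    (hdisj : ∀ j k, j ≠ k → VDisj (E j) (E k)) {j k : ι} {v : V} {e : Sym2 V}
    (hv : ∃ e' ∈ E j, v ∈ e') (he : e ∈ E k) (hve : v ∈ e) : e ∈ E j := by
  by_contra hej
  exact hdisj j k (by rintro rfl; exact hej he) v hv ⟨e, he, hve⟩

-- `e.out.1` is an arbitrary end of `e`; the choice is harmless when both ends have equal degree.
noncomputable def invDegWeight (F : Finset (Sym2 V)) (e : Sym2 V) : ℝ :=
  if e ∈ F then (edgeDeg F e.out.1 : ℝ)⁻¹ else 0

omit [Fintype V] in
lemma invDegWeight_mem_Ioc {F : Finset (Sym2 V)} {e : Sym2 V} (he : e ∈ F) :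
    invDegWeight F e ∈ Set.Ioc 0 1 := by
  have h1 : (1 : ℝ) ≤ edgeDeg F e.out.1 :=
    Nat.one_le_cast.2 (card_pos.2 ⟨e, mem_filter.2 ⟨he, Sym2.out_fst_mem e⟩⟩)
  rw [invDegWeight, if_pos he]
  exact ⟨inv_pos.2 (zero_lt_one.trans_le h1), inv_le_one_of_one_le₀ h1⟩

omit [Fintype V] in
lemma invDegWeight_eq_zero {F : Finset (Sym2 V)} {e : Sym2 V} (he : e ∉ F) :
    invDegWeight F e = 0 :=
  if_neg he

theorem fracDeg_invDegWeight {F : Finset (Sym2 V)}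
    (hreg : ∀ e ∈ F, ∀ u ∈ e, ∀ w ∈ e, edgeDeg F u = edgeDeg F w) {v : V}
    (hv : v ∈ vertSet F) : fracDeg (invDegWeight F) v = 1 := by
  obtain ⟨e, he, hve⟩ := mem_vertSet.1 hv
  have hpos : edgeDeg F v ≠ 0 := (card_pos.2 ⟨e, mem_filter.2 ⟨he, hve⟩⟩).ne'
  rw [fracDeg_eq_sum_filter fun e _ hfe => not_not.1 (mt invDegWeight_eq_zero hfe)]
  rw [sum_congr rfl fun e' he' => by rw [invDegWeight, if_pos (mem_filter.1 he').1,
    hreg e' (mem_filter.1 he').1 _ (Sym2.out_fst_mem e') v (mem_filter.1 he').2]]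
  rw [sum_const, nsmul_eq_mul]
  exact mul_inv_cancel₀ (Nat.cast_ne_zero.2 hpos)

def IsBalancedOddCycleCover (G : SimpleGraph V) (δ : ℕ) (E' : Fin δ → Finset (Sym2 V)) : Prop :=
  (∀ j, (E' j).Nonempty) ∧
  (∀ j, ↑(E' j) ⊆ G.edgeSet) ∧
  (∀ j k, j ≠ k → VDisj (E' j) (E' k)) ∧
  (∀ v : V, ∃ j, ∃ e ∈ E' j, v ∈ e) ∧
  (∀ j, EdgesAndOddCycles (E' j)) ∧
  (∀ j, ((vertSet (E' j)).card : ℝ) = (Fintype.card V : ℝ) / δ)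

theorem IsPartitionWitness.exists_isBalancedOddCycleCover {G : SimpleGraph V}
    {f : Sym2 V → ℝ} {δ : ℕ} {P : Fin δ → Finset (Sym2 V)} (hf : IsFPM G f)
    (hP : IsPartitionWitness f δ P) : ∃ E', IsBalancedOddCycleCover G δ E' := by
  obtain ⟨hf01, hfG, hfdeg⟩ := hf
  obtain ⟨hPne, hPdisj, hPsupp, hPcover, hPsum⟩ := hP
  have hpos : ∀ j, ∀ e ∈ P j, 0 < f e := fun j e he => (mem_filter.1 (hPsupp j he)).2
  have hPG : ∀ j, ∀ e ∈ P j, e ∈ G.edgeSet := fun j e he => by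
    by_contra h
    exact (hpos j e he).ne' (hfG e h)
  have hloop : ∀ j, ∀ e ∈ P j, ¬ e.IsDiag := fun j e he =>
    G.not_isDiag_of_mem_edgeSet (hPG j e he)
  have hsupp : ∀ e, f e ≠ 0 → ∃ j, e ∈ P j := fun e hfe =>
    hPcover e (mem_filter.2 ⟨mem_univ e, lt_of_le_of_ne (hf01 e).1 (Ne.symm hfe)⟩)
  have hPos : ∀ j, IsPosFPMOn (P j) f := fun j => ⟨hpos j, fun v hv => by
    rw [← hfdeg v, fracDeg_eq_sum_filter fun e hve hfe =>
      have ⟨k, hk⟩ := hsupp e hfe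
      mem_of_vDisj hPdisj (mem_vertSet.1 hv) hk hve]⟩
  choose E' hsub hvert hE' using fun j => (hPos j).exists_edgesAndOddCycles (hloop j)
  have hvertE' : ∀ j, ∀ e ∈ P j, ∀ v ∈ e, ∃ e' ∈ E' j, v ∈ e' := fun j e he v hve =>
    mem_vertSet.1 ((hvert j).symm ▸ mem_vertSet.2 ⟨e, he, hve⟩ : v ∈ vertSet (E' j))
  refine ⟨E', fun j => ?_, fun j e he => hPG j e (hsub j he),
    fun j k hjk => (hPdisj j k hjk).mono (hsub j) (hsub k), fun v => ?_, hE', fun j => ?_⟩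
  · obtain ⟨e, he⟩ := hPne j
    obtain ⟨e', he', -⟩ := hvertE' j e he _ (Sym2.out_fst_mem e)
    exact ⟨e', he'⟩
  · obtain ⟨e, hve, hfe⟩ := exists_ne_zero_of_sum_ne_zero ((hfdeg v).symm ▸ one_ne_zero)
    obtain ⟨j, hj⟩ := hsupp e hfe
    exact ⟨j, hvertE' j e hj v (mem_filter.1 hve).2⟩
  · rw [hvert j, card_vertSet_eq_two_mul_sum (hloop j) (hPos j).2, hPsum j]
    ring

theorem IsBalancedOddCycleCover.exists_isFPM_isDeltaPartitionable {G : SimpleGraph V} {δ : ℕ}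
    {E' : Fin δ → Finset (Sym2 V)} (hE : IsBalancedOddCycleCover G δ E') :
    ∃ f, IsFPM G f ∧ IsDeltaPartitionable f δ := by
  obtain ⟨hne, hEG, hdisj, hcover, hE', hcard⟩ := hE
  set U := univ.biUnion E'
  have hclosed : ∀ j, ∀ v ∈ vertSet (E' j), ∀ e ∈ U, v ∈ e → e ∈ E' j := fun j v hv e he hve =>
    have ⟨_, _, hk⟩ := mem_biUnion.1 he
    mem_of_vDisj hdisj (mem_vertSet.1 hv) hk hve
  have hreg : ∀ e ∈ U, ∀ u ∈ e, ∀ w ∈ e, edgeDeg U u = edgeDeg U w := by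
    intro e he u hu w hw
    obtain ⟨j, -, hj⟩ := mem_biUnion.1 he
    have hdeg : ∀ x ∈ e, edgeDeg (E' j) x = edgeDeg U x := fun x hx =>
      edgeDeg_eq_of_forall_mem (subset_biUnion_of_mem E' (mem_univ j))
        (hclosed j x (mem_vertSet.2 ⟨e, hj, hx⟩))
    rw [← hdeg u hu, ← hdeg w hw, (hE' j).edgeDeg_eq hj hu hw]
  have hU : ∀ j, E' j ⊆ U := fun j => subset_biUnion_of_mem E' (mem_univ j)
  have hdeg : ∀ v, fracDeg (invDegWeight U) v = 1 := fun v =>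
    have ⟨j, e, he, hve⟩ := hcover v
    fracDeg_invDegWeight hreg (mem_vertSet.2 ⟨e, hU j he, hve⟩)
  have hfU : ∀ e, invDegWeight U e ≠ 0 → e ∈ U := fun e hfe =>
    not_not.1 (mt invDegWeight_eq_zero hfe)
  refine ⟨invDegWeight U, ⟨fun e => ?_, fun e he => ?_, hdeg⟩, E', hne, hdisj,
    fun j e he => mem_filter.2 ⟨mem_univ e, (invDegWeight_mem_Ioc (hU j he)).1⟩, fun e he => ?_,
    fun j => ?_⟩
  · by_cases he : e ∈ U
    · exact ⟨(invDegWeight_mem_Ioc he).1.le, (invDegWeight_mem_Ioc he).2⟩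
    · simp [invDegWeight_eq_zero he]
  · by_contra hfe
    obtain ⟨j, -, hj⟩ := mem_biUnion.1 (hfU e hfe)
    exact he (hEG j hj)
  · obtain ⟨j, -, hj⟩ := mem_biUnion.1 (hfU e (mem_filter.1 he).2.ne')
    exact ⟨j, hj⟩
  · have hloop : ∀ e ∈ E' j, ¬ e.IsDiag := fun e he => G.not_isDiag_of_mem_edgeSet (hEG j he)
    have := card_vertSet_eq_two_mul_sum hloop fun v hv => by
      rw [← hdeg v, fracDeg_eq_sum_filter fun e hve hfe => hclosed j v hv e (hfU e hfe) hve]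
    rw [mul_comm, ← div_div, ← hcard j, this]
    ring

theorem delta_partitionable_characterization_general (G : SimpleGraph V) (δ : ℕ) :
    (∃ f : Sym2 V → ℝ, IsFPM G f ∧ IsDeltaPartitionable f δ) ↔
    ∃ E' : Fin δ → Finset (Sym2 V),
      (∀ j, (E' j).Nonempty) ∧
      (∀ j, ↑(E' j) ⊆ G.edgeSet) ∧
      (∀ j k, j ≠ k → VDisj (E' j) (E' k)) ∧
      (∀ v : V, ∃ j, ∃ e ∈ E' j, v ∈ e) ∧
      (∀ j, EdgesAndOddCycles (E' j)) ∧
      (∀ j, ((vertSet (E' j)).card : ℝ) = (Fintype.card V : ℝ) / δ) :=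
  ⟨fun ⟨_, hf, _, hP⟩ => hP.exists_isBalancedOddCycleCover hf,
    fun ⟨_, hE⟩ => IsBalancedOddCycleCover.exists_isFPM_isDeltaPartitionable hE⟩

/-- `G` has a `δ`-Partitionable fractional perfect matching iff `E` contains
`δ` nonempty pairwise vertex-disjoint edge sets whose union is an edge cover, each
consisting of single edges and odd cycles and covering exactly `|V|/δ` vertices. -/
theorem delta_partitionable_characterization (G : SimpleGraph V)
    (hG : ∀ v : V, ∃ u, G.Adj u v) (δ : ℕ) (hδ : 1 ≤ δ) :
    (∃ f : Sym2 V → ℝ, IsFPM G f ∧ IsDeltaPartitionable f δ) ↔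
    ∃ E' : Fin δ → Finset (Sym2 V),
      (∀ j, (E' j).Nonempty) ∧
      (∀ j, ↑(E' j) ⊆ G.edgeSet) ∧
      (∀ j k, j ≠ k → VDisj (E' j) (E' k)) ∧
      (∀ v : V, ∃ j, ∃ e ∈ E' j, v ∈ e) ∧
      (∀ j, EdgesAndOddCycles (E' j)) ∧
      (∀ j, ((vertSet (E' j)).card : ℝ) = (Fintype.card V : ℝ) / δ) :=
  delta_partitionable_characterization_general G δ
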